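/- Let n > 3 be an odd integer and let m be an integer with 1 < m < n, gcd(m, n) = 1 and gcd(m − 1, n) = 1. Then L_n(m) is a weak inverse property (WIP) loop if and only if m² − m + 1 ≡ 0 (mod n). -/

import Mathlib

/-!
Since `x * y = e` exactly when `x = y`, the weak inverse property says `y * (x * y) = x` for
all `x, y`. Writing `a = m`, for distinct `i, j` with `i * j ≠ j` a direct computation gives
`j * (i * j) = i + (a² - a + 1)(j - i)`. The pair `i = 0, j = 1` then forces `a² - a + 1 = 0`;
conversely `a² - a + 1 = 0` makes `a - 1` a unit, so `i * j - j = (a - 1)(j - i)` never vanishes.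
-/

/-- The loop `L_n(m)`: carrier `{e} ∪ {1, …, n}`, modeled as `Option (ZMod n)`
with `none` playing the role of the identity `e` and the nonidentity elements
`{1, …, n}` identified with their residues in `ZMod n`.  For distinct nonidentity
`i, j` the product is `m·j − (m−1)·i (mod n)`. -/
def lmul (n m : ℕ) : Option (ZMod n) → Option (ZMod n) → Option (ZMod n)
  | none, x => x
  | some i, none => some i
  | some i, some j =>
      if i = j then none
      else some ((m : ZMod n) * j - ((m : ZMod n) - 1) * i)

theorem weakInverse_iff_of_mul_eq_iff {α : Type*} (mul : α → α → α) (e : α)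
    (hmul : ∀ x y, mul x y = e ↔ x = y) :
    (∀ x y z, mul (mul x y) z = e → mul x (mul y z) = e) ↔ ∀ x y, mul y (mul x y) = x := by
  simp only [hmul]
  exact ⟨fun h x y => (h x y _ rfl).symm, fun h x y _ hz => hz ▸ (h x y).symm⟩

section
variable {n m : ℕ}

@[simp]
lemma lmul_none_left (x : Option (ZMod n)) : lmul n m none x = x := rfl

@[simp]
lemma lmul_none_right : ∀ x : Option (ZMod n), lmul n m x none = x
  | none => rfl
  | some _ => rfl

@[simp]
lemma lmul_self (x : Option (ZMod n)) : lmul n m x x = none := by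
  cases x <;> simp [lmul]

lemma lmul_some_some_of_ne {i j : ZMod n} (h : i ≠ j) :
    lmul n m (some i) (some j) = some ((m : ZMod n) * j - ((m : ZMod n) - 1) * i) :=
  if_neg h

lemma lmul_eq_none_iff : ∀ x y : Option (ZMod n), lmul n m x y = none ↔ x = y
  | none, _ => by simp [eq_comm]
  | some _, none => by simp
  | some i, some j => by by_cases h : i = j <;> simp [lmul, h]

lemma lmul_some_lmul_some {i j : ZMod n} (hij : i ≠ j)
    (hk : (m : ZMod n) * j - ((m : ZMod n) - 1) * i ≠ j) :
    lmul n m (some j) (lmul n m (some i) (some j)) =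
      some (i + ((m : ZMod n) ^ 2 - m + 1) * (j - i)) := by
  rw [lmul_some_some_of_ne hij, lmul_some_some_of_ne hk.symm]
  congr 1
  ring

theorem forall_lmul_lmul_eq_iff (h01 : (0 : ZMod n) ≠ 1) (hm : (m : ZMod n) ≠ 1) :
    (∀ x y, lmul n m y (lmul n m x y) = x) ↔ (m : ZMod n) ^ 2 - m + 1 = 0 := by
  constructor
  · intro h
    have h_zero_one := h (some 0) (some 1)
    rw [lmul_some_lmul_some h01 (by simpa using hm)] at h_zero_one
    simpa using h_zero_one
  · rintro hc (_ | i) (_ | j)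
    · rfl
    · simp
    · simp
    · by_cases hij : i = j
      · simp [hij]
      have hk : (m : ZMod n) * j - ((m : ZMod n) - 1) * i ≠ j := fun hk =>
        hij (by linear_combination (m : ZMod n) * hk - (j - i) * hc)
      rw [lmul_some_lmul_some hij hk, hc]
      simp

end

theorem stmt9_general (n m : ℕ) (hm1 : 1 < m) (hm2 : m < n) :
    (∀ x y z : Option (ZMod n),
        lmul n m (lmul n m x y) z = none → lmul n m x (lmul n m y z) = none) ↔
      n ∣ (m ^ 2 - m + 1) := by
  have h01 : (0 : ZMod n) ≠ 1 := by
    have : Fact (1 < n) := ⟨by omega⟩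
    exact zero_ne_one
  have hm : (m : ZMod n) ≠ 1 := by
    rw [← Nat.cast_one, Ne, ZMod.natCast_eq_natCast_iff', Nat.mod_eq_of_lt hm2,
      Nat.mod_eq_of_lt (by omega)]
    omega
  rw [weakInverse_iff_of_mul_eq_iff _ _ lmul_eq_none_iff, forall_lmul_lmul_eq_iff h01 hm,
    ← ZMod.natCast_eq_zero_iff]
  push_cast [Nat.cast_sub (Nat.le_self_pow two_ne_zero m)]
  rfl

/-- For odd `n > 3` and admissible `m`, the loop `L_n(m)` is a weak inverse
property (WIP) loop — i.e. `(x*y)*z = e` implies `x*(y*z) = e` — if and only if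
`m² − m + 1 ≡ 0 (mod n)`. -/
theorem stmt9 (n m : ℕ) (hn : 3 < n) (hodd : Odd n) (hm1 : 1 < m) (hm2 : m < n)
    (hg1 : Nat.gcd m n = 1) (hg2 : Nat.gcd (m - 1) n = 1) :
    (∀ x y z : Option (ZMod n),
        lmul n m (lmul n m x y) z = none → lmul n m x (lmul n m y z) = none) ↔
      n ∣ (m ^ 2 - m + 1) :=
  stmt9_general n m hm1 hm2
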